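/- arXiv:2601.21509 — 2 statements merged into one kernel-verified Lean document; each statement's English description precedes it below -/
import Mathlib

section
/- Let 𝔤 be an s-step nilpotent Lie algebra with asymptotic grading (V_i)_{i=1}^s and dilations δ_ε. Define for ε ≠ 0 the bracket [x,y]^{(ε)} := δ_ε[δ_ε^{-1}x, δ_ε^{-1}y]. Then [x,y]^{(ε)} is polynomial in ε and its value at ε = 0 satisfies [v,w]^{(0)} = ([v,w])_{i+j} for v ∈ V_i, w ∈ V_j, where (·)_k is the projection onto V_k; in particular [·,·]^{(0)} is the associated graded (Carnot) bracket. -/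
/-- The span of brackets `⁅a,b⁆` with `a ∈ A`, `b ∈ B`. -/
def sbr {L : Type*} [LieRing L] [LieAlgebra ℝ L] (A B : Submodule ℝ L) : Submodule ℝ L :=
  Submodule.span ℝ {x : L | ∃ a ∈ A, ∃ b ∈ B, x = ⁅a, b⁆}

/-- `Δpow Δ k = Δ^k`, the left-iterated bracket `[Δ,…,Δ]` (`k` factors); `Δ^0 := ⊥`. -/
def Δpow {L : Type*} [LieRing L] [LieAlgebra ℝ L] (Δ : Submodule ℝ L) : ℕ → Submodule ℝ L
  | 0 => ⊥
  | 1 => Δ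
  | (k+2) => sbr Δ (Δpow Δ (k+1))

/-- `ΔB Δ j = Δ^{[j]} = Σ_{i=1}^j Δ^i`. -/
def ΔB {L : Type*} [LieRing L] [LieAlgebra ℝ L] (Δ : Submodule ℝ L) (j : ℕ) : Submodule ℝ L :=
  ⨆ i ∈ Finset.Icc 1 j, Δpow Δ i

/-- Lower central series, indexed so that `lcs L 1 = 𝔤`, `lcs L (j+1) = [𝔤, lcs L j]`. -/
def lcs (L : Type*) [LieRing L] [LieAlgebra ℝ L] : ℕ → Submodule ℝ L
  | 0 => ⊤
  | 1 => ⊤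
  | (j+2) => sbr ⊤ (lcs L (j+1))

/-!
Writing `x = ∑ π_i x` in homogeneous components, the conjugated bracket
`δ_ε ⁅δ_ε⁻¹ x, δ_ε⁻¹ y⁆` is `∑ ε ^ (k - i - j) • π_k ⁅π_i x, π_j y⁆`. Since
`⁅V_i, V_j⁆ ⊆ lcs (i + j)` and `π_k` vanishes on `lcs m` for `k < m` (the grading splits the
lower central series), no negative power of `ε` occurs, so the expression is polynomial in `ε`;
at `ε = 0` only the component `k = i + j` survives.
-/

open Finset

section Filtration

variable {R M : Type*} [Ring R] [AddCommGroup M] [Module R M]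
  {F V : ℕ → Submodule R M} {s : ℕ}

def IsAsymptoticGrading (F V : ℕ → Submodule R M) (s : ℕ) : Prop :=
  ∀ j ∈ Icc 1 s, F j = V j ⊔ F (j + 1) ∧ V j ⊓ F (j + 1) = ⊥

variable {π : ℕ → M →ₗ[R] M}

theorem apply_eq_sum_smul_proj (hπmem : ∀ j ∈ Icc 1 s, ∀ x, π j x ∈ V j)
    (hπsum : ∀ x, ∑ j ∈ Icc 1 s, π j x = x)
    {f : M →ₗ[R] M} {c : ℕ → R} (hf : ∀ j ∈ Icc 1 s, ∀ x ∈ V j, f x = c j • x) (z : M) :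
    f z = ∑ j ∈ Icc 1 s, c j • π j z := by
  conv_lhs => rw [← hπsum z]
  rw [map_sum]
  exact sum_congr rfl fun j hj => hf j hj _ (hπmem j hj z)

namespace IsAsymptoticGrading

theorem le_filtration (hV : IsAsymptoticGrading F V s) {j : ℕ} (hj : j ∈ Icc 1 s) : V j ≤ F j :=
  (hV j hj).1 ▸ le_sup_left

theorem filtration_le_of_le (hV : IsAsymptoticGrading F V s) {m k : ℕ} (hm : 1 ≤ m)
    (hmk : m ≤ k) (hk : k ≤ s + 1) : F k ≤ F m := by
  induction k, hmk using Nat.le_induction with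
  | base => exact le_rfl
  | succ n hmn ih =>
    calc F (n + 1) ≤ F n := (hV n (mem_Icc.2 ⟨by omega, by omega⟩)).1 ▸ le_sup_right
      _ ≤ F m := ih (by omega)

theorem eq_zero_of_sum_eq_zero (hV : IsAsymptoticGrading F V s) {v : ℕ → M}
    (hv : ∀ k ∈ Icc 1 s, v k ∈ V k) {m : ℕ} (hm : 1 ≤ m) (hsum : ∑ k ∈ Icc m s, v k = 0) :
    ∀ k ∈ Icc m s, v k = 0 := by
  obtain ⟨n, hn⟩ : ∃ n, s < m + n := ⟨s + 1, by omega⟩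
  induction n generalizing m with
  | zero => intro k hk; simp only [mem_Icc] at hk; omega
  | succ n ih =>
    rcases lt_or_ge s m with hsm | hms
    · intro k hk; simp only [mem_Icc] at hk; omega
    rw [← insert_Icc_add_one_left_eq_Icc hms] at hsum ⊢
    rw [sum_insert (by simp)] at hsum
    have hm' : m ∈ Icc 1 s := mem_Icc.2 ⟨hm, hms⟩
    have htail : ∑ k ∈ Icc (m + 1) s, v k ∈ F (m + 1) := Submodule.sum_mem _ fun k hk => by
      obtain ⟨hmk, hks⟩ := mem_Icc.1 hk
      have hk' : k ∈ Icc 1 s := mem_Icc.2 ⟨by omega, hks⟩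
      exact hV.filtration_le_of_le (by omega) hmk (by omega) (hV.le_filtration hk' (hv k hk'))
    have hvm : v m = 0 := by
      have hmem : v m ∈ V m ⊓ F (m + 1) :=
        ⟨hv m hm', eq_neg_of_add_eq_zero_left hsum ▸ neg_mem htail⟩
      rwa [(hV m hm').2, Submodule.mem_bot] at hmem
    rw [hvm, zero_add] at hsum
    exact forall_mem_insert _ _ _ |>.2 ⟨hvm, ih (by omega) hsum (by omega)⟩

theorem proj_apply_of_mem (hV : IsAsymptoticGrading F V s)
    (hπmem : ∀ j ∈ Icc 1 s, ∀ x, π j x ∈ V j) (hπsum : ∀ x, ∑ j ∈ Icc 1 s, π j x = x)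
    {k l : ℕ} (hk : k ∈ Icc 1 s) (hl : l ∈ Icc 1 s) {x : M} (hx : x ∈ V k) :
    π l x = if l = k then x else 0 := by
  have hzero := hV.eq_zero_of_sum_eq_zero (v := fun n => π n x - if n = k then x else 0)
    (fun n hn => by
      split_ifs with h
      · exact sub_mem (hπmem n hn x) (h ▸ hx)
      · simpa using hπmem n hn x) le_rfl
    (by rw [sum_sub_distrib, hπsum, sum_ite_eq', if_pos hk, sub_self]) l hl
  exact sub_eq_zero.1 hzero

theorem proj_eq_zero_of_lt (hV : IsAsymptoticGrading F V s) (hbot : ∀ m, s < m → F m = ⊥)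
    (hπmem : ∀ j ∈ Icc 1 s, ∀ x, π j x ∈ V j) (hπsum : ∀ x, ∑ j ∈ Icc 1 s, π j x = x)
    {l m : ℕ} (hl : l ∈ Icc 1 s) (hlm : l < m) {x : M} (hx : x ∈ F m) : π l x = 0 := by
  obtain ⟨n, hn⟩ : ∃ n, s < m + n := ⟨s + 1, by omega⟩
  induction n generalizing m x with
  | zero => rw [hbot m (by omega), Submodule.mem_bot] at hx; rw [hx, map_zero]
  | succ n ih =>
    rcases lt_or_ge s m with hsm | hms
    · rw [hbot m hsm, Submodule.mem_bot] at hx; rw [hx, map_zero]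
    have hm : m ∈ Icc 1 s := mem_Icc.2 ⟨by omega, hms⟩
    obtain ⟨a, ha, b, hb, rfl⟩ := Submodule.mem_sup.1 ((hV m hm).1 ▸ hx)
    rw [map_add, hV.proj_apply_of_mem hπmem hπsum hm hl ha, if_neg hlm.ne,
      ih (by omega) hb (by omega), add_zero]

end IsAsymptoticGrading

end Filtration

section LowerCentralSeries

variable {L : Type*} [LieRing L] [LieAlgebra ℝ L]

theorem lie_mem_sbr {A B : Submodule ℝ L} {a b : L} (ha : a ∈ A) (hb : b ∈ B) :
    ⁅a, b⁆ ∈ sbr A B :=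
  Submodule.subset_span ⟨a, ha, b, hb, rfl⟩

theorem sbr_bot (A : Submodule ℝ L) : sbr A ⊥ = ⊥ :=
  Submodule.span_eq_bot.2 fun _ ⟨_, _, _, hb, hx⟩ => by
    rw [hx, (Submodule.mem_bot ℝ).1 hb, lie_zero]

variable (L) in
theorem lcs_succ {j : ℕ} (hj : 1 ≤ j) : lcs L (j + 1) = sbr ⊤ (lcs L j) := by
  obtain ⟨k, rfl⟩ := Nat.exists_eq_add_of_le' hj
  rfl

theorem lie_mem_lcs_succ {j : ℕ} (hj : 1 ≤ j) (t : L) {a : L} (ha : a ∈ lcs L j) :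
    ⁅t, a⁆ ∈ lcs L (j + 1) :=
  lcs_succ L hj ▸ lie_mem_sbr Submodule.mem_top ha

theorem lie_mem_lcs {i j : ℕ} (hi : 1 ≤ i) (hj : 1 ≤ j) {a b : L} (ha : a ∈ lcs L i)
    (hb : b ∈ lcs L j) : ⁅a, b⁆ ∈ lcs L (i + j) := by
  induction j, hj using Nat.le_induction generalizing i a b with
  | base => rw [← lie_skew]; exact neg_mem (lie_mem_lcs_succ hi b ha)
  | succ j hj ih =>
    rw [lcs_succ L hj] at hb
    induction hb using Submodule.span_induction with
    | mem x hx =>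
      obtain ⟨t, -, c, hc, rfl⟩ := hx
      rw [leibniz_lie]
      refine add_mem ?_ ?_
      · have hat : ⁅a, t⁆ ∈ lcs L (i + 1) := by
          rw [← lie_skew]; exact neg_mem (lie_mem_lcs_succ hi t ha)
        rw [← Nat.add_assoc, Nat.add_right_comm]; exact ih (by omega) hat hc
      · exact lie_mem_lcs_succ (j := i + j) (by omega) t (ih hi ha hc)
    | zero => simp
    | add x y _ _ hx hy => rw [lie_add]; exact add_mem hx hy
    | smul r x _ hx => rw [lie_smul]; exact Submodule.smul_mem _ _ hx

theorem lcs_eq_bot_of_le {n m : ℕ} (hn : 1 ≤ n) (hnm : n ≤ m) (hbot : lcs L n = ⊥) :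
    lcs L m = ⊥ := by
  induction m, hnm using Nat.le_induction with
  | base => exact hbot
  | succ m hm ih => rw [lcs_succ L (by omega), ih, sbr_bot]

end LowerCentralSeries

theorem Finset.exists_sum_pow_smul_eq_sum_range {ι R M : Type*} [Semiring R] [AddCommMonoid M]
    [Module R M] (t : Finset ι) (e : ι → ℕ) (u : ι → M) :
    ∃ (N : ℕ) (c : ℕ → M), ∀ r : R, ∑ a ∈ t, r ^ e a • u a = ∑ n ∈ range N, r ^ n • c n := by
  refine ⟨t.sup e + 1, fun n => ∑ a ∈ t with e a = n, u a, fun r => ?_⟩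
  rw [← sum_fiberwise_of_maps_to (g := e) fun a ha => mem_range.2 (Nat.lt_succ_of_le (le_sup ha))]
  refine sum_congr rfl fun n _ => ?_
  rw [smul_sum]
  exact sum_congr rfl fun a ha => by rw [(mem_filter.1 ha).2]

section RescaledBracket

variable {K L : Type*} [Field K] [LieRing L] [LieAlgebra K L]

/-- The exponent `k - (i + j)` truncates at `0`; harmless, since the terms with `k < i + j`
vanish once `π_k ⁅V_i, V_j⁆ = 0` for `k < i + j`. -/
def rescaledBracket (π : ℕ → L →ₗ[K] L) (s : ℕ) (ε : K) : L →ₗ[K] L →ₗ[K] L :=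
  ∑ i ∈ Icc 1 s, ∑ j ∈ Icc 1 s, ∑ k ∈ Icc 1 s,
    ε ^ (k - (i + j)) •
      ((LieModule.toEnd K L L : L →ₗ[K] L →ₗ[K] L).compl₁₂ (π i) (π j)).compr₂ (π k)

variable {π : ℕ → L →ₗ[K] L} {s : ℕ}

theorem rescaledBracket_apply (ε : K) (x y : L) :
    rescaledBracket π s ε x y = ∑ i ∈ Icc 1 s, ∑ j ∈ Icc 1 s, ∑ k ∈ Icc 1 s,
      ε ^ (k - (i + j)) • π k ⁅π i x, π j y⁆ := by
  simp [rescaledBracket]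

theorem rescaledBracket_exists_sum_range (x y : L) :
    ∃ (N : ℕ) (c : ℕ → L), ∀ ε : K, rescaledBracket π s ε x y = ∑ n ∈ range N, ε ^ n • c n := by
  obtain ⟨N, c, hc⟩ := (Icc 1 s ×ˢ Icc 1 s ×ˢ Icc 1 s).exists_sum_pow_smul_eq_sum_range (R := K)
    (fun p => p.2.2 - (p.1 + p.2.1)) (fun p => π p.2.2 ⁅π p.1 x, π p.2.1 y⁆)
  refine ⟨N, c, fun ε => ?_⟩
  rw [rescaledBracket_apply, ← hc, sum_product]
  simp_rw [sum_product]

theorem rescaledBracket_apply_of_ne_zero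
    (hfilt : ∀ i ∈ Icc 1 s, ∀ j ∈ Icc 1 s, ∀ k ∈ Icc 1 s, k < i + j →
      ∀ x y, π k ⁅π i x, π j y⁆ = 0)
    {δ : K → L →ₗ[K] L} (hδ : ∀ μ z, δ μ z = ∑ k ∈ Icc 1 s, μ ^ k • π k z)
    {ε : K} (hε : ε ≠ 0) (x y : L) :
    rescaledBracket π s ε x y = δ ε ⁅δ ε⁻¹ x, δ ε⁻¹ y⁆ := by
  rw [hδ ε⁻¹ x, hδ ε⁻¹ y, sum_lie_sum, map_sum, rescaledBracket_apply]
  refine sum_congr rfl fun i hi => ?_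
  rw [map_sum]
  refine sum_congr rfl fun j hj => ?_
  rw [smul_lie, lie_smul, map_smul, map_smul, hδ, smul_sum, smul_sum]
  refine sum_congr rfl fun k hk => ?_
  rw [smul_smul, smul_smul]
  rcases lt_or_ge k (i + j) with hlt | hge
  · rw [hfilt i hi j hj k hk hlt, smul_zero, smul_zero]
  · rw [pow_sub₀ ε hε hge, pow_add, inv_pow, inv_pow]
    congr 1
    ring

theorem rescaledBracket_apply_of_homogeneous {i j : ℕ} (hi : i ∈ Icc 1 s) (hj : j ∈ Icc 1 s)
    {v w : L} (hv : ∀ l ∈ Icc 1 s, π l v = if l = i then v else 0)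
    (hw : ∀ l ∈ Icc 1 s, π l w = if l = j then w else 0) (ε : K) :
    rescaledBracket π s ε v w = ∑ k ∈ Icc 1 s, ε ^ (k - (i + j)) • π k ⁅v, w⁆ := by
  rw [rescaledBracket_apply, sum_eq_single_of_mem i hi, sum_eq_single_of_mem j hj, hv i hi,
    hw j hj, if_pos rfl, if_pos rfl]
  · intro j' hj' hne
    simp [hw j' hj', hne]
  · intro i' hi' hne
    simp [hv i' hi', hne]

end RescaledBracket

section CarnotBracket

variable {L : Type*} [LieRing L] [LieAlgebra ℝ L] {V : ℕ → Submodule ℝ L} {π : ℕ → L →ₗ[ℝ] L}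
  {s : ℕ}

theorem proj_lie_eq_zero_of_lt_add (hV : IsAsymptoticGrading (lcs L) V s)
    (hnil : lcs L (s + 1) = ⊥) (hπmem : ∀ j ∈ Icc 1 s, ∀ x, π j x ∈ V j)
    (hπsum : ∀ x, ∑ j ∈ Icc 1 s, π j x = x) {i j k : ℕ} (hi : i ∈ Icc 1 s) (hj : j ∈ Icc 1 s)
    (hk : k ∈ Icc 1 s) (hkij : k < i + j) {v w : L} (hv : v ∈ V i) (hw : w ∈ V j) :
    π k ⁅v, w⁆ = 0 :=
  hV.proj_eq_zero_of_lt (fun m hm => lcs_eq_bot_of_le (by omega) hm hnil) hπmem hπsum hk hkij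
    (lie_mem_lcs (mem_Icc.1 hi).1 (mem_Icc.1 hj).1 (hV.le_filtration hi hv)
      (hV.le_filtration hj hw))

theorem lie_eq_zero_of_lt_add (hV : IsAsymptoticGrading (lcs L) V s) (hnil : lcs L (s + 1) = ⊥)
    {i j : ℕ} (hi : i ∈ Icc 1 s) (hj : j ∈ Icc 1 s) (hs : s < i + j) {v w : L} (hv : v ∈ V i)
    (hw : w ∈ V j) : ⁅v, w⁆ = 0 := by
  have hvw := lie_mem_lcs (mem_Icc.1 hi).1 (mem_Icc.1 hj).1 (hV.le_filtration hi hv)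
    (hV.le_filtration hj hw)
  rwa [lcs_eq_bot_of_le (by omega) hs hnil, Submodule.mem_bot] at hvw

theorem rescaledBracket_zero_apply_of_mem (hV : IsAsymptoticGrading (lcs L) V s)
    (hnil : lcs L (s + 1) = ⊥) (hπmem : ∀ j ∈ Icc 1 s, ∀ x, π j x ∈ V j)
    (hπsum : ∀ x, ∑ j ∈ Icc 1 s, π j x = x) {i j : ℕ} (hi : i ∈ Icc 1 s) (hj : j ∈ Icc 1 s)
    {v w : L} (hv : v ∈ V i) (hw : w ∈ V j) :
    rescaledBracket π s 0 v w = π (i + j) ⁅v, w⁆ := by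
  rw [rescaledBracket_apply_of_homogeneous hi hj
    (fun l hl => hV.proj_apply_of_mem hπmem hπsum hi hl hv)
    (fun l hl => hV.proj_apply_of_mem hπmem hπsum hj hl hw)]
  refine (sum_eq_single (i + j) (fun k hk hne => ?_) fun hij => ?_).trans (by simp)
  · rcases lt_or_gt_of_ne hne with hlt | hgt
    · rw [proj_lie_eq_zero_of_lt_add hV hnil hπmem hπsum hi hj hk hlt hv hw, smul_zero]
    · rw [zero_pow (Nat.sub_ne_zero_of_lt hgt), zero_smul]
  · have hs : s < i + j := by
      simp only [mem_Icc] at hi hij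
      omega
    rw [lie_eq_zero_of_lt_add hV hnil hi hj hs hv hw, map_zero, smul_zero]

end CarnotBracket

theorem stmt9_general {L : Type*} [LieRing L] [LieAlgebra ℝ L]
    (s : ℕ)
    (hnil : lcs L (s+1) = ⊥)
    (V : ℕ → Submodule ℝ L)
    (hgrad : ∀ j ∈ Finset.Icc 1 s,
      lcs L j = V j ⊔ lcs L (j+1) ∧ V j ⊓ lcs L (j+1) = ⊥)
    (δ : ℝ → L →ₗ[ℝ] L)
    (hδ : ∀ (ε : ℝ), ∀ j ∈ Finset.Icc 1 s, ∀ x ∈ V j, δ ε x = ε ^ j • x)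
    (π : ℕ → L →ₗ[ℝ] L)
    (hπmem : ∀ j x, π j x ∈ V j)
    (hπsum : ∀ x : L, (∑ j ∈ Finset.Icc 1 s, π j x) = x) :
    ∃ B : ℝ → L →ₗ[ℝ] L →ₗ[ℝ] L,
      (∀ ε : ℝ, ε ≠ 0 → ∀ x y : L, B ε x y = δ ε ⁅δ (1/ε) x, δ (1/ε) y⁆) ∧
      (∀ x y : L, ∃ (N : ℕ) (c : ℕ → L),
        ∀ ε : ℝ, B ε x y = ∑ i ∈ Finset.range N, ε ^ i • c i) ∧
      (∀ i ∈ Finset.Icc 1 s, ∀ j ∈ Finset.Icc 1 s, ∀ v ∈ V i, ∀ w ∈ V j,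
        B 0 v w = π (i + j) ⁅v, w⁆) := by
  have hπmem' : ∀ j ∈ Icc 1 s, ∀ x, π j x ∈ V j := fun j _ => hπmem j
  refine ⟨rescaledBracket π s, fun ε hε x y => ?_, rescaledBracket_exists_sum_range,
    fun i hi j hj v hv w hw =>
      rescaledBracket_zero_apply_of_mem hgrad hnil hπmem' hπsum hi hj hv hw⟩
  rw [one_div]
  exact rescaledBracket_apply_of_ne_zero
    (fun i hi j hj k hk hkij x y =>
      proj_lie_eq_zero_of_lt_add hgrad hnil hπmem' hπsum hi hj hk hkij (hπmem i x) (hπmem j y))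
    (fun μ => apply_eq_sum_smul_proj hπmem' hπsum (hδ μ)) hε x y

/-- for an asymptotic grading `(V i)_{i=1}^s` of an `s`-step nilpotent Lie
algebra with dilations `δ ε`, the rescaled brackets `[x,y]^{(ε)} = δ_ε ⁅δ_ε⁻¹ x, δ_ε⁻¹ y⁆`
(for `ε ≠ 0`) are polynomial in `ε`, hence extend to `ε = 0`, and the value at `0` is the
associated graded (Carnot) bracket: `[v,w]^{(0)} = (⁅v,w⁆)_{i+j}` for `v ∈ V i`, `w ∈ V j`. -/
theorem stmt9 {L : Type*} [LieRing L] [LieAlgebra ℝ L] [FiniteDimensional ℝ L]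
    (s : ℕ) (hs : 1 ≤ s)
    (hnil : lcs L (s+1) = ⊥) (hstep : lcs L s ≠ ⊥)
    (V : ℕ → Submodule ℝ L)
    (hV0 : ∀ j, j ∉ Finset.Icc 1 s → V j = ⊥)
    (hgrad : ∀ j ∈ Finset.Icc 1 s,
      lcs L j = V j ⊔ lcs L (j+1) ∧ V j ⊓ lcs L (j+1) = ⊥)
    (δ : ℝ → L →ₗ[ℝ] L)
    (hδ : ∀ (ε : ℝ), ∀ j ∈ Finset.Icc 1 s, ∀ x ∈ V j, δ ε x = ε ^ j • x)
    (π : ℕ → L →ₗ[ℝ] L)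
    (hπmem : ∀ j x, π j x ∈ V j)
    (hπsum : ∀ x : L, (∑ j ∈ Finset.Icc 1 s, π j x) = x)
    (hπid : ∀ j, ∀ x ∈ V j, π j x = x) :
    ∃ B : ℝ → L →ₗ[ℝ] L →ₗ[ℝ] L,
      (∀ ε : ℝ, ε ≠ 0 → ∀ x y : L, B ε x y = δ ε ⁅δ (1/ε) x, δ (1/ε) y⁆) ∧
      (∀ x y : L, ∃ (N : ℕ) (c : ℕ → L),
        ∀ ε : ℝ, B ε x y = ∑ i ∈ Finset.range N, ε ^ i • c i) ∧
      (∀ i ∈ Finset.Icc 1 s, ∀ j ∈ Finset.Icc 1 s, ∀ v ∈ V i, ∀ w ∈ V j,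
        B 0 v w = π (i + j) ⁅v, w⁆) :=
  stmt9_general s hnil V hgrad δ hδ π hπmem hπsum
end

section
/- Let 𝔤 be a nilpotent Lie algebra with asymptotic grading (V_i)_{i=1}^s and Carnot quotient ideal 𝔦. Denote by [·,·]^{(ε,𝔦)} the quotient bracket on 𝔤/𝔦 induced by [·,·]^{(ε)}. Then [·,·]^{(ε,𝔦)} = [·,·]^{(τ,𝔦)} for all ε, τ ∈ [0,1], i.e. the quotient bracket is independent of ε. -/
section Aux

variable {L : Type*} [LieRing L] [LieAlgebra ℝ L]

lemma sbr_le_of {A B T : Submodule ℝ L} (h : ∀ a ∈ A, ∀ b ∈ B, ⁅a, b⁆ ∈ T) :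
    sbr A B ≤ T := by
  rw [sbr, Submodule.span_le]
  rintro x ⟨a, ha, c, hc, rfl⟩
  exact h a ha c hc

lemma mem_sbr {A B : Submodule ℝ L} {a c : L} (ha : a ∈ A) (hc : c ∈ B) :
    ⁅a, c⁆ ∈ sbr A B :=
  Submodule.subset_span ⟨a, ha, c, hc, rfl⟩

lemma claimA1 (s : ℕ) (V : ℕ → Submodule ℝ L) (𝔦 : Submodule ℝ L)
    (hV0 : ∀ j, j ∉ Finset.Icc 1 s → V j = ⊥)
    (hstrat : ∀ j ∈ Finset.Icc 1 (s-1), sbr (V 1) (V j) ⊔ 𝔦 = V (j+1) ⊔ 𝔦)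
    (hstrat_s : sbr (V 1) (V s) ≤ 𝔦) :
    ∀ j, 1 ≤ j → sbr (V 1) (V j) ≤ V (1 + j) ⊔ 𝔦 := by
  intro j hj
  rcases lt_trichotomy j s with h | rfl | h
  · have heq := hstrat j (by simp only [Finset.mem_Icc]; omega)
    calc sbr (V 1) (V j) ≤ sbr (V 1) (V j) ⊔ 𝔦 := le_sup_left
    _ = V (j+1) ⊔ 𝔦 := heq
    _ = V (1+j) ⊔ 𝔦 := by rw [Nat.add_comm]
  · exact hstrat_s.trans le_sup_right
  · apply sbr_le_of; intro a _ c hc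
    rw [hV0 j (by simp only [Finset.mem_Icc]; omega)] at hc
    rw [(Submodule.mem_bot ℝ).mp hc]
    simp

lemma claimA (s : ℕ) (V : ℕ → Submodule ℝ L) (𝔦 : Submodule ℝ L)
    (hV0 : ∀ j, j ∉ Finset.Icc 1 s → V j = ⊥)
    (hideal : ∀ x : L, ∀ y ∈ 𝔦, ⁅x, y⁆ ∈ 𝔦)
    (hstrat : ∀ j ∈ Finset.Icc 1 (s-1), sbr (V 1) (V j) ⊔ 𝔦 = V (j+1) ⊔ 𝔦)
    (hstrat_s : sbr (V 1) (V s) ≤ 𝔦) :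
    ∀ i, 1 ≤ i → ∀ j, 1 ≤ j → sbr (V i) (V j) ≤ V (i + j) ⊔ 𝔦 := by
  have A1 := claimA1 s V 𝔦 hV0 hstrat hstrat_s
  intro i hi
  induction i, hi using Nat.le_induction with
  | base => exact A1
  | succ i hi IH =>
    intro j hj
    by_cases hi1 : i + 1 ≤ s
    case neg =>
      apply sbr_le_of; intro a ha c _
      rw [hV0 (i+1) (by simp only [Finset.mem_Icc]; omega)] at ha
      rw [(Submodule.mem_bot ℝ).mp ha]
      simp
    case pos =>
      apply sbr_le_of; intro x hx y hy
      have hx2 : x ∈ sbr (V 1) (V i) ⊔ 𝔦 := by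
        rw [hstrat i (by simp only [Finset.mem_Icc]; omega)]
        exact Submodule.mem_sup_left hx
      clear hx
      obtain ⟨u, hu, w, hw, rfl⟩ := Submodule.mem_sup.mp hx2
      clear hx2
      rw [add_lie]
      apply Submodule.add_mem
      · induction hu using Submodule.span_induction with
        | mem z hz =>
          obtain ⟨a, ha, m, hm, rfl⟩ := hz
          rw [lie_lie]
          apply Submodule.sub_mem
          · have h1 : ⁅m, y⁆ ∈ V (i+j) ⊔ 𝔦 := IH j hj (mem_sbr hm hy)
            obtain ⟨v, hv, w', hw', hvw⟩ := Submodule.mem_sup.mp h1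
            rw [← hvw, lie_add]
            apply Submodule.add_mem
            · have h2 := A1 (i+j) (by omega) (mem_sbr ha hv)
              have e : 1 + (i+j) = i+1+j := by omega
              rwa [e] at h2
            · exact Submodule.mem_sup_right (hideal a w' hw')
          · have h1 : ⁅a, y⁆ ∈ V (1+j) ⊔ 𝔦 := A1 j hj (mem_sbr ha hy)
            obtain ⟨v, hv, w', hw', hvw⟩ := Submodule.mem_sup.mp h1
            rw [← hvw, lie_add]
            apply Submodule.add_mem
            · have h2 := IH (1+j) (by omega) (mem_sbr hm hv)
              have e : i + (1+j) = i+1+j := by omega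
              rwa [e] at h2
            · exact Submodule.mem_sup_right (hideal m w' hw')
        | zero => simp
        | add u1 u2 _ _ p1 p2 => rw [add_lie]; exact Submodule.add_mem _ p1 p2
        | smul r u _ p => rw [smul_lie]; exact Submodule.smul_mem _ r p
      · refine Submodule.mem_sup_right ?_
        rw [← lie_skew]
        exact Submodule.neg_mem _ (hideal y w hw)

lemma V_le_lcs (s : ℕ) (V : ℕ → Submodule ℝ L)
    (hgrad : ∀ j ∈ Finset.Icc 1 s,
      lcs L j = V j ⊔ lcs L (j+1) ∧ V j ⊓ lcs L (j+1) = ⊥) :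
    ∀ m j, 1 ≤ m → m ≤ j → j ≤ s → V j ≤ lcs L m := by
  have h1 : ∀ j, 1 ≤ j → j ≤ s → V j ≤ lcs L j := fun j a c =>
    le_sup_left.trans (hgrad j (Finset.mem_Icc.mpr ⟨a, c⟩)).1.ge
  have h2 : ∀ m j, 1 ≤ m → m ≤ j → j ≤ s → lcs L j ≤ lcs L m := by
    intro m j hm hmj hjs
    induction j, hmj using Nat.le_induction with
    | base => exact le_rfl
    | succ j hj IH =>
      have hstep : lcs L (j+1) ≤ lcs L j :=
        le_sup_right.trans (hgrad j (Finset.mem_Icc.mpr ⟨by omega, by omega⟩)).1.ge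
      exact hstep.trans (IH (by omega))
  exact fun m j hm hmj hjs => (h1 j (by omega) hjs).trans (h2 m j hm hmj hjs)

lemma indep (s : ℕ) (V : ℕ → Submodule ℝ L)
    (hV0 : ∀ j, j ∉ Finset.Icc 1 s → V j = ⊥)
    (hgrad : ∀ j ∈ Finset.Icc 1 s,
      lcs L j = V j ⊔ lcs L (j+1) ∧ V j ⊓ lcs L (j+1) = ⊥) :
    ∀ (f : ℕ → L), (∀ j, f j ∈ V j) → (∑ j ∈ Finset.Icc 1 s, f j) = 0 → ∀ k, f k = 0 := by
  have hmain : ∀ t m (f : ℕ → L), (∀ j, f j ∈ V j) → m + t = s + 1 → 1 ≤ m →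
      (∑ j ∈ Finset.Icc m s, f j) = 0 → ∀ k, m ≤ k → f k = 0 := by
    intro t
    induction t with
    | zero =>
      intro m f hf hmt hm _ k hk
      have h := hf k
      rw [hV0 k (by simp only [Finset.mem_Icc]; omega)] at h
      exact (Submodule.mem_bot ℝ).mp h
    | succ t IH =>
      intro m f hf hmt hm hsum k hk
      have hms : m ≤ s := by omega
      have hsplit : Finset.Icc m s = insert m (Finset.Icc (m+1) s) := by
        ext x; simp only [Finset.mem_Icc, Finset.mem_insert]; omega
      rw [hsplit, Finset.sum_insert (by simp [Finset.mem_Icc])] at hsum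
      have hS : (∑ j ∈ Finset.Icc (m+1) s, f j) ∈ lcs L (m+1) := by
        apply Submodule.sum_mem
        intro j hjmem
        rw [Finset.mem_Icc] at hjmem
        exact V_le_lcs s V hgrad (m+1) j (by omega) hjmem.1 hjmem.2 (hf j)
      have hfm : f m = 0 := by
        have h1 : f m ∈ V m ⊓ lcs L (m+1) := by
          refine Submodule.mem_inf.mpr ⟨hf m, ?_⟩
          rw [eq_neg_of_add_eq_zero_left hsum]
          exact Submodule.neg_mem _ hS
        rw [(hgrad m (Finset.mem_Icc.mpr ⟨hm, hms⟩)).2] at h1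
        exact (Submodule.mem_bot ℝ).mp h1
      have hsum2 : (∑ j ∈ Finset.Icc (m+1) s, f j) = 0 := by
        rwa [hfm, zero_add] at hsum
      rcases Nat.eq_or_lt_of_le hk with rfl | hk'
      · exact hfm
      · exact IH (m+1) f hf (by omega) (by omega) hsum2 k (by omega)
  intro f hf hsum k
  by_cases hk : 1 ≤ k
  · exact hmain s 1 f hf (by omega) le_rfl hsum k hk
  · have h := hf k
    rw [hV0 k (by simp only [Finset.mem_Icc]; omega)] at h
    exact (Submodule.mem_bot ℝ).mp h

end Aux

/-- for a Carnot quotient ideal `𝔦` with respect to an asymptotic grading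
`(V i)_{i=1}^s`, the quotient bracket on `𝔤/𝔦` induced by the rescaled brackets
`[·,·]^{(ε)}` is independent of `ε ∈ [0,1]`: `[x,y]^{(ε)} ≡ [x,y]^{(τ)} mod 𝔦`. -/
theorem stmt16 {L : Type*} [LieRing L] [LieAlgebra ℝ L] [FiniteDimensional ℝ L]
    (s : ℕ) (hs : 1 ≤ s)
    (hnil : lcs L (s+1) = ⊥) (hstep : lcs L s ≠ ⊥)
    (V : ℕ → Submodule ℝ L)
    (hV0 : ∀ j, j ∉ Finset.Icc 1 s → V j = ⊥)
    (hgrad : ∀ j ∈ Finset.Icc 1 s,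
      lcs L j = V j ⊔ lcs L (j+1) ∧ V j ⊓ lcs L (j+1) = ⊥)
    (Δ : Submodule ℝ L)
    (hbg : LieSubalgebra.lieSpan ℝ L (Δ : Set L) = ⊤)
    (δ : ℝ → L →ₗ[ℝ] L)
    (hδ : ∀ (ε : ℝ), ∀ j ∈ Finset.Icc 1 s, ∀ x ∈ V j, δ ε x = ε ^ j • x)
    (π : ℕ → L →ₗ[ℝ] L)
    (hπmem : ∀ j x, π j x ∈ V j)
    (hπsum : ∀ x : L, (∑ j ∈ Finset.Icc 1 s, π j x) = x)
    (hπid : ∀ j, ∀ x ∈ V j, π j x = x)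
    (b : ℝ → L →ₗ[ℝ] L →ₗ[ℝ] L)
    (hb : ∀ ε : ℝ, ε ≠ 0 → ∀ x y : L, b ε x y = δ ε ⁅δ (1/ε) x, δ (1/ε) y⁆)
    (hb0 : ∀ i j : ℕ, ∀ x ∈ V i, ∀ y ∈ V j, b 0 x y = π (i + j) ⁅x, y⁆)
    (𝔦 : Submodule ℝ L)
    (hideal : ∀ x : L, ∀ y ∈ 𝔦, ⁅x, y⁆ ∈ 𝔦)
    (hdil : ∀ τ : ℝ, 0 < τ → ∀ x ∈ 𝔦, δ τ x ∈ 𝔦)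
    (hstrat : ∀ j ∈ Finset.Icc 1 (s-1), sbr (V 1) (V j) ⊔ 𝔦 = V (j+1) ⊔ 𝔦)
    (hstrat_s : sbr (V 1) (V s) ≤ 𝔦)
    (hΔ𝔦 : Δ ≤ V 1 ⊔ 𝔦) :
    ∀ ε ∈ Set.Icc (0:ℝ) 1, ∀ τ ∈ Set.Icc (0:ℝ) 1, ∀ x y : L,
      (Submodule.Quotient.mk (b ε x y) : L ⧸ 𝔦) = Submodule.Quotient.mk (b τ x y) := by
  -- π k vanishes on V l for k ≠ l
  have hπ0 : ∀ l k, k ≠ l → ∀ x ∈ V l, π k x = 0 := by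
    intro l k hkl x hx
    by_cases hl : l ∈ Finset.Icc 1 s
    case neg =>
      have hx0 : x = 0 := by rw [hV0 l hl] at hx; exact (Submodule.mem_bot ℝ).mp hx
      simp [hx0]
    case pos =>
      set f : ℕ → L := fun j => π j x - (if j = l then x else 0) with hf
      have hfm : ∀ j, f j ∈ V j := by
        intro j; by_cases hj : j = l
        · subst hj; simpa [hf] using Submodule.sub_mem _ (hπmem j x) hx
        · simpa [hf, hj] using hπmem j x
      have hfs : (∑ j ∈ Finset.Icc 1 s, f j) = 0 := by
        simp only [hf]
        rw [Finset.sum_sub_distrib, hπsum, Finset.sum_ite_eq' (Finset.Icc 1 s) l (fun _ => x)]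
        simp [hl]
      have h := indep s V hV0 hgrad f hfm hfs k
      simpa [hf, hkl] using h
  -- dilation decomposition
  have hdec : ∀ (τ : ℝ) (x : L), δ τ x = ∑ j ∈ Finset.Icc 1 s, τ ^ j • π j x := by
    intro τ x
    conv_lhs => rw [← hπsum x]
    rw [map_sum]
    exact Finset.sum_congr rfl fun j hj => hδ τ j hj (π j x) (hπmem j x)
  -- 𝔦 is graded
  have h𝔦π : ∀ x ∈ 𝔦, ∀ k, π k x ∈ 𝔦 := by
    intro x hx k
    by_cases hk : k ∈ Finset.Icc 1 s
    case neg =>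
      have h := hπmem k x
      rw [hV0 k hk] at h
      rw [(Submodule.mem_bot ℝ).mp h]
      exact Submodule.zero_mem _
    case pos =>
      rw [← Submodule.Quotient.mk_eq_zero 𝔦]
      rw [← Module.forall_dual_apply_eq_zero_iff ℝ]
      intro φ
      set p : Polynomial ℝ :=
        ∑ j ∈ Finset.Icc 1 s,
          Polynomial.C (φ (Submodule.Quotient.mk (π j x))) * Polynomial.X ^ j with hp
      have hroot : ∀ τ : ℝ, 0 < τ → p.IsRoot τ := by
        intro τ hτ
        have h1 : δ τ x ∈ 𝔦 := hdil τ hτ x hx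
        have h2 : φ (Submodule.Quotient.mk (δ τ x) : L ⧸ 𝔦) = 0 := by
          rw [(Submodule.Quotient.mk_eq_zero 𝔦).mpr h1, map_zero]
        rw [hdec τ x] at h2
        have h3 : (Submodule.Quotient.mk (∑ j ∈ Finset.Icc 1 s, τ ^ j • π j x) : L ⧸ 𝔦)
            = ∑ j ∈ Finset.Icc 1 s, τ ^ j • (Submodule.Quotient.mk (π j x) : L ⧸ 𝔦) := by
          rw [← Submodule.mkQ_apply, map_sum]
          simp [Submodule.mkQ_apply]
        rw [h3, map_sum] at h2
        simp only [map_smul, smul_eq_mul] at h2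
        show p.eval τ = 0
        rw [hp, Polynomial.eval_finset_sum]
        simp only [Polynomial.eval_mul, Polynomial.eval_C, Polynomial.eval_pow,
          Polynomial.eval_X]
        rw [← h2]
        exact Finset.sum_congr rfl fun j _ => mul_comm _ _
      have hpz : p = 0 :=
        Polynomial.eq_zero_of_infinite_isRoot p
          ((Set.Ioi_infinite (0:ℝ)).mono (fun τ hτ => hroot τ hτ))
      have hco := congrArg (fun q => Polynomial.coeff q k) hpz
      simpa [hp, Polynomial.finset_sum_coeff, Polynomial.coeff_C_mul,
        Polynomial.coeff_X_pow, hk] using hco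
  have hA := claimA s V 𝔦 hV0 hideal hstrat hstrat_s
  -- key pointwise lemma
  have key : ∀ (ε : ℝ) (i j : ℕ), i ∈ Finset.Icc 1 s → j ∈ Finset.Icc 1 s →
      ∀ x ∈ V i, ∀ y ∈ V j, b ε x y - π (i+j) ⁅x, y⁆ ∈ 𝔦 := by
    intro ε i j hi hj x hx y hy
    rcases Finset.mem_Icc.mp hi with ⟨hi1, his⟩
    rcases Finset.mem_Icc.mp hj with ⟨hj1, hjs⟩
    have hxy : ⁅x, y⁆ ∈ V (i+j) ⊔ 𝔦 := hA i hi1 j hj1 (mem_sbr hx hy)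
    by_cases hε : ε = 0
    · subst hε
      rw [hb0 i j x hx y hy, sub_self]
      exact Submodule.zero_mem _
    · obtain ⟨v, hv, w, hw, hvw⟩ := Submodule.mem_sup.mp hxy
      have hπk : ∀ k, k ≠ i + j → π k ⁅x, y⁆ ∈ 𝔦 := by
        intro k hk
        rw [← hvw, map_add, hπ0 (i+j) k hk v hv, zero_add]
        exact h𝔦π w hw k
      have hbe : b ε x y = ∑ k ∈ Finset.Icc 1 s, ((1/ε)^(i+j) * ε^k) • π k ⁅x, y⁆ := by
        rw [hb ε hε x y, hδ (1/ε) i hi x hx, hδ (1/ε) j hj y hy, smul_lie, lie_smul,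
          smul_smul, map_smul, hdec ε ⁅x, y⁆, Finset.smul_sum]
        refine Finset.sum_congr rfl fun k _ => ?_
        rw [smul_smul]
        congr 1
        ring
      rw [hbe]
      by_cases hij : i + j ≤ s
      · rw [← Finset.sum_erase_add _ _ (Finset.mem_Icc.mpr ⟨by omega, hij⟩)]
        have hc : (1/ε)^(i+j) * ε^(i+j) = 1 := by
          rw [one_div, inv_pow, inv_mul_cancel₀ (pow_ne_zero _ hε)]
        rw [hc, one_smul, add_sub_cancel_right]
        exact Submodule.sum_mem _ fun k hk =>
          Submodule.smul_mem _ _ (hπk k (Finset.mem_erase.mp hk).1)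
      · have hv0 : v = 0 := by
          rw [hV0 (i+j) (by simp only [Finset.mem_Icc]; omega)] at hv
          exact (Submodule.mem_bot ℝ).mp hv
        have hxy𝔦 : ⁅x, y⁆ ∈ 𝔦 := by rw [← hvw, hv0, zero_add]; exact hw
        exact Submodule.sub_mem _
          (Submodule.sum_mem _ fun k _ => Submodule.smul_mem _ _ (h𝔦π _ hxy𝔦 k))
          (h𝔦π _ hxy𝔦 (i+j))
  -- master lemma
  have master : ∀ (ε : ℝ) (x y : L),
      b ε x y - (∑ i ∈ Finset.Icc 1 s, ∑ j ∈ Finset.Icc 1 s, π (i+j) ⁅π i x, π j y⁆) ∈ 𝔦 := by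
    intro ε x y
    have h1 : b ε x y = ∑ i ∈ Finset.Icc 1 s, ∑ j ∈ Finset.Icc 1 s,
        b ε (π i x) (π j y) := by
      conv_lhs => rw [← hπsum x, ← hπsum y]
      simp only [map_sum, LinearMap.sum_apply]
      exact Finset.sum_comm
    rw [h1, ← Finset.sum_sub_distrib]
    refine Submodule.sum_mem _ fun i hi => ?_
    rw [← Finset.sum_sub_distrib]
    exact Submodule.sum_mem _ fun j hj =>
      key ε i j hi hj (π i x) (hπmem i x) (π j y) (hπmem j y)
  intro ε _ τ _ x y
  rw [Submodule.Quotient.eq]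
  have h := Submodule.sub_mem 𝔦 (master ε x y) (master τ x y)
  simpa [sub_sub_sub_cancel_right] using h
end
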